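/- Let T be a simple totally ordered nontrivial commutative BCK-algebra and X any set. The ideal lattice of FS(X,T) is a Boolean algebra isomorphic to the powerset Boolean algebra P(X); in particular, the complement of V(S) is V(X∖S). -/

import Mathlib

/-- A commutative BCK-algebra: an algebra `(A, ·, 0)` satisfying (BCK1)–(BCK4). -/
class CBCK (A : Type*) extends Mul A, Zero A where
  bck1 : ∀ x y z : A, x * y * z = x * z * y
  bck2 : ∀ x y : A, x * (x * y) = y * (y * x)
  bck3 : ∀ x : A, x * x = 0
  bck4 : ∀ x : A, x * 0 = x
/-- An ideal of a BCK-algebra. -/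
def IsIdeal {A : Type*} [Mul A] [Zero A] (I : Set A) : Prop :=
  (0 : A) ∈ I ∧ ∀ x y : A, x * y ∈ I → y ∈ I → x ∈ I
theorem CBCK.zero_mul' {A : Type*} [CBCK A] (x : A) : 0 * x = 0 := by
  have h1 : ∀ a : A, (0 : A) * (0 * a) = 0 := by
    intro a
    rw [← CBCK.bck2, CBCK.bck4, CBCK.bck3]
  have h2 := CBCK.bck1 (0 : A) (0 * x) x
  rw [h1, CBCK.bck3] at h2
  exact h2

/-- `FS X T`: finitely supported functions from `X` to `T`. -/
def FS (X T : Type*) [CBCK T] : Type _ := {f : X → T // {x | f x ≠ 0}.Finite}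

instance {X T : Type*} [CBCK T] : Mul (FS X T) :=
  ⟨fun f g => ⟨fun x => f.1 x * g.1 x,
    f.2.subset fun x hx hf => hx (by simp only [Set.mem_setOf_eq] at hf ⊢
                                     rw [hf, CBCK.zero_mul'])⟩⟩

instance {X T : Type*} [CBCK T] : Zero (FS X T) :=
  ⟨⟨fun _ => 0, by simp⟩⟩

/-- `V S`: the functions in `FS X T` vanishing on `S`. -/
def V {X T : Type*} [CBCK T] (S : Set X) : Set (FS X T) :=
  {f | ∀ s ∈ S, f.1 s = 0}

/-- A cBCK-algebra is simple if its only ideals are `{0}` and the whole algebra. -/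
def CBCK.Simple (A : Type*) [CBCK A] : Prop :=
  ∀ I : Set A, IsIdeal I → I = {0} ∨ I = Set.univ
/-- The ideal generated by a subset `G`. -/
def IdealGen {A : Type*} [Mul A] [Zero A] (G : Set A) : Set A :=
  ⋂₀ {I : Set A | IsIdeal I ∧ G ⊆ I}

open scoped Classical in
noncomputable def delta {X T : Type*} [CBCK T] (x : X) (t : T) : FS X T :=
  ⟨fun y => if y = x then t else 0, Set.Finite.subset (Set.finite_singleton x) (by
    intro y hy
    simp only [Set.mem_setOf_eq] at hy
    by_contra h
    simp only [Set.mem_singleton_iff] at h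
    rw [if_neg h] at hy
    exact hy rfl)⟩

open scoped Classical in
theorem delta_apply {X T : Type*} [CBCK T] (x : X) (t : T) (y : X) :
    (delta x t).1 y = if y = x then t else 0 := rfl

open scoped Classical

theorem FS.zero_apply {X T : Type*} [CBCK T] (x : X) : (0 : FS X T).1 x = 0 := rfl

theorem FS.mul_apply {X T : Type*} [CBCK T] (f g : FS X T) (x : X) :
    (f * g).1 x = f.1 x * g.1 x := rfl

theorem FS.ext' {X T : Type*} [CBCK T] {f g : FS X T} (h : ∀ x, f.1 x = g.1 x) : f = g :=
  Subtype.ext (funext h)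

theorem delta_mul_delta {X T : Type*} [CBCK T] (x : X) (s u : T) :
    delta x s * delta x u = delta (T := T) x (s * u) := by
  apply FS.ext'
  intro y
  rw [FS.mul_apply, delta_apply, delta_apply, delta_apply]
  by_cases h : y = x
  · simp [h]
  · simp [h, CBCK.zero_mul', FS.zero_apply]

theorem delta_zero {X T : Type*} [CBCK T] (x : X) : delta (T := T) x 0 = 0 := by
  apply FS.ext'
  intro y
  rw [delta_apply]
  by_cases h : y = x <;> simp [h, FS.zero_apply]

/-- If some element of the ideal is nonzero at `x`, every `delta x t` belongs. -/
theorem delta_mem {X T : Type*} [CBCK T] (hsimp : CBCK.Simple T)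
    {I : Set (FS X T)} (hI : IsIdeal I) {g : FS X T} (hg : g ∈ I) {x : X}
    (hgx : g.1 x ≠ 0) (t : T) : delta x t ∈ I := by
  set J : Set T := {s | delta x s ∈ I} with hJdef
  have hJ : IsIdeal J := by
    constructor
    · show delta (T := T) x 0 ∈ I
      rw [delta_zero]; exact hI.1
    · intro s u hsu hu
      exact hI.2 (delta x s) (delta x u) (by rwa [delta_mul_delta]) hu
  have hgxJ : g.1 x ∈ J := by
    have h0 : delta x (g.1 x) * g = 0 := by
      apply FS.ext'
      intro y
      rw [FS.mul_apply, delta_apply]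
      by_cases h : y = x
      · simp [h, CBCK.bck3, FS.zero_apply]
      · simp [h, CBCK.zero_mul', FS.zero_apply]
    exact hI.2 (delta x (g.1 x)) g (by rw [h0]; exact hI.1) hg
  rcases hsimp J hJ with h | h
  · rw [h] at hgxJ; exact absurd hgxJ hgx
  · have : t ∈ J := h ▸ Set.mem_univ t
    exact this

/-- Induction on the support: if all point-deltas of the support lie in an ideal,
so does the function. -/
theorem mem_of_deltas {X T : Type*} [CBCK T] {I : Set (FS X T)} (hI : IsIdeal I) :
    ∀ (n : ℕ) (f : FS X T), f.2.toFinset.card ≤ n →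
      (∀ x, f.1 x ≠ 0 → ∀ t : T, delta x t ∈ I) → f ∈ I := by
  intro n
  induction n with
  | zero =>
    intro f hc _
    have hf : f = 0 := by
      apply FS.ext'
      intro y
      by_contra hy
      have : y ∈ f.2.toFinset := by simpa [Set.Finite.mem_toFinset, FS.zero_apply] using hy
      have := Finset.card_pos.2 ⟨y, this⟩
      omega
    rw [hf]; exact hI.1
  | succ n ih =>
    intro f hc hdel
    by_cases hemp : f.2.toFinset = ∅
    · have hf : f = 0 := by
        apply FS.ext'
        intro y
        by_contra hy
        have : y ∈ f.2.toFinset := by simpa [Set.Finite.mem_toFinset, FS.zero_apply] using hy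
        simp [hemp] at this
      rw [hf]; exact hI.1
    · obtain ⟨x, hx⟩ := Finset.nonempty_of_ne_empty hemp
      have hfx : f.1 x ≠ 0 := (Set.Finite.mem_toFinset _).1 hx
      set f' := f * delta x (f.1 x) with hf'
      have hf'app : ∀ y, f'.1 y = if y = x then 0 else f.1 y := by
        intro y
        rw [hf', FS.mul_apply, delta_apply]
        by_cases h : y = x
        · simp [h, CBCK.bck3, FS.zero_apply]
        · simp [h, CBCK.bck4]
      have hsub : f'.2.toFinset ⊆ f.2.toFinset.erase x := by
        intro y hy
        have hy' : f'.1 y ≠ 0 := (Set.Finite.mem_toFinset _).1 hy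
        rw [hf'app] at hy'
        by_cases h : y = x
        · simp [h] at hy'
        · rw [if_neg h] at hy'
          exact Finset.mem_erase.2 ⟨h, (Set.Finite.mem_toFinset _).2 hy'⟩
      have hcard : f'.2.toFinset.card ≤ n := by
        have h1 := Finset.card_le_card hsub
        have h2 := Finset.card_erase_of_mem hx
        omega
      have hf'mem : f' ∈ I := by
        apply ih f' hcard
        intro y hy t
        apply hdel
        intro h0
        rw [hf'app] at hy
        by_cases h : y = x
        · simp [h] at hy
        · rw [if_neg h, h0] at hy; exact hy rfl
      exact hI.2 f (delta x (f.1 x)) hf'mem (hdel x hfx (f.1 x))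

/-- The ideal of functions supported inside `A`. -/
def Phi {X T : Type*} [CBCK T] (A : Set X) : Set (FS X T) :=
  {f | ∀ x, f.1 x ≠ 0 → x ∈ A}

theorem phi_isIdeal {X T : Type*} [CBCK T] (A : Set X) : IsIdeal (Phi (T := T) A) := by
  constructor
  · intro x hx; exact absurd (FS.zero_apply x) hx
  · intro f g hfg hg x hx
    by_cases hgx : g.1 x = 0
    · have : (f * g).1 x ≠ 0 := by rw [FS.mul_apply, hgx, CBCK.bck4]; exact hx
      exact hfg x this
    · exact hg x hgx

theorem delta_mem_phi {X T : Type*} [CBCK T] {A : Set X} {x : X} (hx : x ∈ A) (t : T) :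
    delta x t ∈ Phi (T := T) A := by
  intro y hy
  by_cases h : y = x
  · rwa [h]
  · rw [delta_apply, if_neg h] at hy; exact absurd rfl hy

noncomputable def theIso {X T : Type*} [CBCK T] (hsimp : CBCK.Simple T)
    (hnt : ∃ t : T, t ≠ 0) : Set X ≃o {I : Set (FS X T) // IsIdeal I} where
  toFun A := ⟨Phi A, phi_isIdeal A⟩
  invFun I := {x | ∃ f ∈ I.1, f.1 x ≠ 0}
  left_inv A := by
    obtain ⟨t, ht⟩ := hnt
    ext x
    constructor
    · rintro ⟨f, hf, hfx⟩
      exact hf x hfx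
    · intro hx
      refine ⟨delta x t, delta_mem_phi hx t, ?_⟩
      rw [delta_apply, if_pos rfl]; exact ht
  right_inv I := by
    apply Subtype.ext
    ext f
    constructor
    · intro hf
      apply mem_of_deltas I.2 f.2.toFinset.card f le_rfl
      intro x hx t
      obtain ⟨g, hg, hgx⟩ := hf x hx
      exact delta_mem hsimp I.2 hg hgx t
    · intro hf x hx
      exact ⟨f, hf, hx⟩
  map_rel_iff' := by
    intro A B
    obtain ⟨t, ht⟩ := hnt
    constructor
    · intro h x hx
      have : delta x t ∈ Phi (T := T) B := h (delta_mem_phi hx t)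
      apply this x
      rw [delta_apply, if_pos rfl]; exact ht
    · intro h f hf x hx
      exact h (hf x hx)


/-- For `T` a simple nontrivial cBCK-chain, the ideal lattice of `FS(X,T)` is a
Boolean algebra isomorphic to the powerset of `X`; the complement of `V(S)` is
`V(Sᶜ)`. -/
theorem stmt_18 {X T : Type*} [CBCK T]
    (htot : ∀ x y : T, x * y = 0 ∨ y * x = 0) (hsimp : CBCK.Simple T)
    (hnt : ∃ t : T, t ≠ 0) :
    Nonempty ({I : Set (FS X T) // IsIdeal I} ≃o Set X) ∧
    ∀ S : Set X, (V S : Set (FS X T)) ∩ V Sᶜ = {0} ∧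
      IdealGen ((V S : Set (FS X T)) ∪ V Sᶜ) = Set.univ := by
  constructor
  · exact ⟨(theIso hsimp hnt).symm⟩
  · intro S
    constructor
    · ext f
      simp only [Set.mem_inter_iff, Set.mem_singleton_iff]
      constructor
      · rintro ⟨h1, h2⟩
        apply FS.ext'
        intro x
        rw [FS.zero_apply]
        by_cases hx : x ∈ S
        · exact h1 x hx
        · exact h2 x hx
      · rintro rfl
        exact ⟨fun s _ => FS.zero_apply s, fun s _ => FS.zero_apply s⟩
    · apply Set.eq_univ_of_forall
      intro f
      intro I hI
      obtain ⟨hIideal, hIsub⟩ := hI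
      apply mem_of_deltas hIideal f.2.toFinset.card f le_rfl
      intro x _ t
      by_cases hx : x ∈ S
      · apply hIsub
        right
        intro s hs
        rw [delta_apply, if_neg]
        intro h; rw [h] at hs; exact hs hx
      · apply hIsub
        left
        intro s hs
        rw [delta_apply, if_neg]
        intro h; rw [h] at hs; exact hx hs
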